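/- arXiv:1412.6579 — 2 statements merged into one kernel-verified Lean document; each statement's English description precedes it below -/
import Mathlib

section
/- The chop operator is associative: for any setoid trace predicates P, Q and R, (P ** Q) ** R ⇔ P ** (Q ** R). -/
namespace WhileTrace

/-- Program variables. -/
abbrev Var := ℕ
/-- States assign integer values to variables. -/
abbrev State := Var → ℤ
/-- Arithmetic expressions, modelled by their integer value in each state. -/
abbrev Expr := State → ℤ

/-- State update `σ[x ↦ v]`. -/
def update (σ : State) (x : Var) (v : ℤ) : State := Function.update σ x v

/-- Reading an expression as a boolean: `σ ⊨ e`. -/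
def istrue (e : Expr) (σ : State) : Prop := e σ ≠ 0

/-- Traces: nonempty, possibly infinite sequences of states
(a head state together with a possibly infinite sequence of further states). -/
def Trace : Type := State × Stream'.Seq State

/-- The singleton trace `⟨σ⟩`. -/
def Trace.single (σ : State) : Trace := (σ, Stream'.Seq.nil)

/-- The cons trace `σ :: τ`. -/
def Trace.cons (σ : State) (τ : Trace) : Trace := (σ, Stream'.Seq.cons τ.1 τ.2)

/-- The first state of a trace. -/
def Trace.hd (τ : Trace) : State := τ.1

/-- Bisimilarity of traces `τ ≈ τ'`, as a greatest fixed point: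
there is a relation `R` relating the two traces that is consistent with the
coinductive rules `⟨σ⟩ ≈ ⟨σ⟩` and `σ::τ ≈ σ::τ'` whenever `τ ≈ τ'`. -/
def Bisim (τ τ' : Trace) : Prop :=
  ∃ R : Trace → Trace → Prop, R τ τ' ∧
    ∀ a b, R a b →
      (∃ σ, a = Trace.single σ ∧ b = Trace.single σ) ∨
      (∃ σ a' b', a = Trace.cons σ a' ∧ b = Trace.cons σ b' ∧ R a' b')

/-- Finiteness `τ ↓ σ` : `τ` is finite with last state `σ` (inductive). -/
inductive Converges : Trace → State → Prop
  | single (σ : State) : Converges (Trace.single σ) σ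
  | cons (σ' : State) {τ : Trace} {σ : State} :
      Converges τ σ → Converges (Trace.cons σ' τ) σ

/-- Infiniteness of a trace (coinductive, as a greatest fixed point). -/
def InfiniteT (τ : Trace) : Prop :=
  ∃ P : Trace → Prop, P τ ∧ ∀ a, P a → ∃ σ a', a = Trace.cons σ a' ∧ P a'

/-- Statements of the While language. -/
inductive Stmt : Type
  | assign (x : Var) (e : Expr)
  | skip
  | seq (s₀ s₁ : Stmt)
  | ifte (e : Expr) (st sf : Stmt)
  | whileDo (e : Expr) (st : Stmt)

/-- A pair of relations `(E, ES)` is consistent with the rules of evaluation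
and extended evaluation: every claimed evaluation is backed by one of the
coinductive rules, with premises again in `(E, ES)`. -/
def EvalConsistent (E : Stmt → State → Trace → Prop)
    (ES : Stmt → Trace → Trace → Prop) : Prop :=
  (∀ x e σ τ, E (.assign x e) σ τ →
      τ = Trace.cons σ (Trace.single (update σ x (e σ)))) ∧
  (∀ σ τ, E .skip σ τ → τ = Trace.single σ) ∧
  (∀ s₀ s₁ σ τ', E (.seq s₀ s₁) σ τ' → ∃ τ, E s₀ σ τ ∧ ES s₁ τ τ') ∧
  (∀ e st sf σ τ, E (.ifte e st sf) σ τ →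
      (istrue e σ ∧ ES st (Trace.cons σ (Trace.single σ)) τ) ∨
      (¬ istrue e σ ∧ ES sf (Trace.cons σ (Trace.single σ)) τ)) ∧
  (∀ e st σ τ', E (.whileDo e st) σ τ' →
      (istrue e σ ∧ ∃ τ, ES st (Trace.cons σ (Trace.single σ)) τ ∧
        ES (.whileDo e st) τ τ') ∨
      (¬ istrue e σ ∧ τ' = Trace.cons σ (Trace.single σ))) ∧
  (∀ s τ τ', ES s τ τ' →
      (∃ σ, τ = Trace.single σ ∧ E s σ τ') ∨
      (∃ σ τ₀ τ₀', τ = Trace.cons σ τ₀ ∧ τ' = Trace.cons σ τ₀' ∧ ES s τ₀ τ₀'))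

/-- Evaluation `(s,σ) ⇒ τ` : greatest fixed point of the mutual coinductive rules. -/
def Exec (s : Stmt) (σ : State) (τ : Trace) : Prop :=
  ∃ E ES, EvalConsistent E ES ∧ E s σ τ

/-- Extended evaluation `(s,τ) ⇒* τ'`. -/
def ExecSeq (s : Stmt) (τ τ' : Trace) : Prop :=
  ∃ E ES, EvalConsistent E ES ∧ ES s τ τ'

/-- The standard inductive state-based big-step semantics `(s,σ) ⇓ σ'`. -/
inductive BigStep : Stmt → State → State → Prop
  | assign (x : Var) (e : Expr) (σ : State) :
      BigStep (.assign x e) σ (update σ x (e σ))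
  | skip (σ : State) : BigStep .skip σ σ
  | seq {s₀ s₁ : Stmt} {σ σ' σ'' : State} :
      BigStep s₀ σ σ' → BigStep s₁ σ' σ'' → BigStep (.seq s₀ s₁) σ σ''
  | ifTrue {e : Expr} {st sf : Stmt} {σ σ' : State} :
      istrue e σ → BigStep st σ σ' → BigStep (.ifte e st sf) σ σ'
  | ifFalse {e : Expr} {st sf : Stmt} {σ σ' : State} :
      ¬ istrue e σ → BigStep sf σ σ' → BigStep (.ifte e st sf) σ σ'
  | whileTrue {e : Expr} {st : Stmt} {σ σ' σ'' : State} :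
      istrue e σ → BigStep st σ σ' → BigStep (.whileDo e st) σ' σ'' →
      BigStep (.whileDo e st) σ σ''
  | whileFalse {e : Expr} {st : Stmt} {σ : State} :
      ¬ istrue e σ → BigStep (.whileDo e st) σ σ

/-- State predicates. -/
abbrev StatePred := State → Prop
/-- Trace predicates. -/
abbrev TracePred := Trace → Prop

/-- A setoid trace predicate respects bisimilarity. -/
def IsSetoidPred (P : TracePred) : Prop := ∀ τ τ', P τ → Bisim τ τ' → P τ'

/-- The singleton predicate `[U]`. -/
def Sglt (U : StatePred) : TracePred :=
  fun τ => ∃ σ, U σ ∧ τ = Trace.single σ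

/-- The doubleton predicate `⟨U⟩`. -/
def Dup (U : StatePred) : TracePred :=
  fun τ => ∃ σ, U σ ∧ τ = Trace.cons σ (Trace.single σ)

/-- The update predicate `U[x ↦ e]`. -/
def UpdPred (U : StatePred) (x : Var) (e : Expr) : TracePred :=
  fun τ => ∃ σ, U σ ∧ τ = Trace.cons σ (Trace.single (update σ x (e σ)))

/-- `Q follows τ in τ'` (coinductive, as a greatest fixed point). -/
def Follows (Q : TracePred) (τ τ' : Trace) : Prop :=
  ∃ R : Trace → Trace → Prop, R τ τ' ∧
    ∀ a b, R a b →
      (∃ σ, a = Trace.single σ ∧ b.hd = σ ∧ Q b) ∨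
      (∃ σ a' b', a = Trace.cons σ a' ∧ b = Trace.cons σ b' ∧ R a' b')

/-- The chop `P ** Q`. -/
def Chop (P Q : TracePred) : TracePred :=
  fun τ' => ∃ τ, P τ ∧ Follows Q τ τ'

/-- The iteration `P*` (coinductive, as a greatest fixed point). -/
def Iter (P : TracePred) : TracePred := fun τ =>
  ∃ X : TracePred, X τ ∧
    ∀ a, X a → Sglt (fun _ => True) a ∨ ∃ τ₀, P τ₀ ∧ Follows X τ₀ a

/-- `Last P` : states that are the last state of some finite trace satisfying `P`. -/
def Last (P : TracePred) : StatePred := fun σ => ∃ τ, P τ ∧ Converges τ σ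

/-- The trace predicate `finite`. -/
def FiniteT : TracePred := fun τ => ∃ σ, Converges τ σ

/-- Derivability `⊢ {U} s {P}` in the trace-based Hoare logic. -/
inductive THoare : StatePred → Stmt → TracePred → Prop
  | assign (U : StatePred) (x : Var) (e : Expr) :
      THoare U (.assign x e) (UpdPred U x e)
  | skip (U : StatePred) : THoare U .skip (Sglt U)
  | seq {U V : StatePred} {s₀ s₁ : Stmt} {P Q : TracePred} :
      THoare U s₀ (Chop P (Sglt V)) → THoare V s₁ Q →
      THoare U (.seq s₀ s₁) (Chop P Q)
  | ifte {U : StatePred} {e : Expr} {st sf : Stmt} {P : TracePred} :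
      THoare (fun σ => istrue e σ ∧ U σ) st P →
      THoare (fun σ => ¬ istrue e σ ∧ U σ) sf P →
      THoare U (.ifte e st sf) (Chop (Dup U) P)
  | whileDo {U I : StatePred} {e : Expr} {st : Stmt} {P : TracePred} :
      (∀ σ, U σ → I σ) →
      THoare (fun σ => istrue e σ ∧ I σ) st (Chop P (Sglt I)) →
      THoare U (.whileDo e st)
        (Chop (Dup U)
          (Chop (Iter (Chop P (Dup I))) (Sglt (fun σ => ¬ istrue e σ))))
  | conseq {U U' : StatePred} {s : Stmt} {P P' : TracePred} :
      (∀ σ, U σ → U' σ) → THoare U' s P' → (∀ τ, P' τ → P τ) →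
      THoare U s P
  | exist {Z : Type} {U : Z → StatePred} {s : Stmt} {P : Z → TracePred} :
      (∀ z, THoare (U z) s (P z)) →
      THoare (fun σ => ∃ z, U z σ) s (fun τ => ∃ z, P z τ)

/-- Derivability `⊢p {U} s {Z}` in the state-based partial-correctness Hoare logic. -/
inductive PHoare : StatePred → Stmt → StatePred → Prop
  | assign (Z : StatePred) (x : Var) (e : Expr) :
      PHoare (fun σ => Z (update σ x (e σ))) (.assign x e) Z
  | skip (U : StatePred) : PHoare U .skip U
  | seq {U V Z : StatePred} {s₀ s₁ : Stmt} :
      PHoare U s₀ V → PHoare V s₁ Z → PHoare U (.seq s₀ s₁) Z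
  | ifte {U Z : StatePred} {e : Expr} {st sf : Stmt} :
      PHoare (fun σ => istrue e σ ∧ U σ) st Z →
      PHoare (fun σ => ¬ istrue e σ ∧ U σ) sf Z →
      PHoare U (.ifte e st sf) Z
  | whileDo {I : StatePred} {e : Expr} {st : Stmt} :
      PHoare (fun σ => istrue e σ ∧ I σ) st I →
      PHoare I (.whileDo e st) (fun σ => I σ ∧ ¬ istrue e σ)
  | exist {Z : Type} {U V : Z → StatePred} {s : Stmt} :
      (∀ z, PHoare (U z) s (V z)) →
      PHoare (fun σ => ∃ z, U z σ) s (fun σ => ∃ z, V z σ)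
  | conseq {U U' Z Z' : StatePred} {s : Stmt} :
      (∀ σ, U σ → U' σ) → PHoare U' s Z' → (∀ σ, Z' σ → Z σ) →
      PHoare U s Z

/-- Derivability `⊢t {U} s {Z}` in the state-based total-correctness Hoare
logic, with the `while-fun` rule. -/
inductive TotHoare : StatePred → Stmt → StatePred → Prop
  | assign (Z : StatePred) (x : Var) (e : Expr) :
      TotHoare (fun σ => Z (update σ x (e σ))) (.assign x e) Z
  | skip (U : StatePred) : TotHoare U .skip U
  | seq {U V Z : StatePred} {s₀ s₁ : Stmt} :
      TotHoare U s₀ V → TotHoare V s₁ Z → TotHoare U (.seq s₀ s₁) Z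
  | ifte {U Z : StatePred} {e : Expr} {st sf : Stmt} :
      TotHoare (fun σ => istrue e σ ∧ U σ) st Z →
      TotHoare (fun σ => ¬ istrue e σ ∧ U σ) sf Z →
      TotHoare U (.ifte e st sf) Z
  | whileFun {I : StatePred} {e : Expr} {st : Stmt} (t : State → ℕ) (m : ℕ) :
      (∀ n : ℕ, TotHoare (fun σ => istrue e σ ∧ I σ ∧ t σ = n) st
        (fun σ => I σ ∧ t σ < n)) →
      TotHoare (fun σ => I σ ∧ t σ = m) (.whileDo e st)
        (fun σ => I σ ∧ t σ ≤ m ∧ ¬ istrue e σ)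
  | exist {Z : Type} {U V : Z → StatePred} {s : Stmt} :
      (∀ z, TotHoare (U z) s (V z)) →
      TotHoare (fun σ => ∃ z, U z σ) s (fun σ => ∃ z, V z σ)
  | conseq {U U' Z Z' : StatePred} {s : Stmt} :
      (∀ σ, U σ → U' σ) → TotHoare U' s Z' → (∀ σ, Z' σ → Z σ) →
      TotHoare U s Z

/-! Unfolding the chops, `(P ** Q) ** R` and `P ** (Q ** R)` differ only in where the
intermediate trace is quantified, so associativity reduces to: `Q ** R` follows `τ` in `τ'`
iff `Q` follows `τ` in some `τ₁` and `R` follows `τ₁` in `τ'`. From right to left this is a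
coinduction on the pair of `follows` relations. From left to right, if `τ` is infinite then
`τ' = τ` and `τ` itself is the intermediate trace; if `τ` is finite with last state `σ`, then
`τ'` is `τ` with a `(Q ** R)`-trace starting in `σ` glued onto its end, and splitting that
trace as a `Q`-trace `τ₁` followed by an `R`-continuation gives the intermediate trace
`τ` glued with `τ₁`. -/

namespace Trace

/-- Glues `τ'` onto the end of `τ`, identifying the last state of `τ` with the first state
of `τ'`; meaningful only when `τ` is finite and ends in `τ'.hd`. -/
def append (τ τ' : Trace) : Trace := (τ.1, τ.2.append τ'.2)

theorem cons_inj {σ σ' : State} {τ τ' : Trace} (h : cons σ τ = cons σ' τ') :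
    σ = σ' ∧ τ = τ' := by
  obtain ⟨hhd, htl⟩ := Stream'.Seq.cons_injective2 (congrArg Prod.snd h)
  exact ⟨congrArg Prod.fst h, Prod.ext hhd htl⟩

theorem single_ne_cons {σ σ' : State} {τ : Trace} : single σ ≠ cons σ' τ :=
  fun h => Stream'.Seq.nil_ne_cons (congrArg Prod.snd h)

theorem single_append {σ : State} {τ : Trace} (h : τ.hd = σ) : (single σ).append τ = τ :=
  Prod.ext h.symm (Stream'.Seq.nil_append _)

theorem append_single (τ : Trace) (σ : State) : τ.append (single σ) = τ :=
  Prod.ext rfl (Stream'.Seq.append_nil _)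

theorem cons_append (σ : State) (τ τ' : Trace) :
    (cons σ τ).append τ' = cons σ (τ.append τ') :=
  Prod.ext rfl (Stream'.Seq.cons_append _ _ _)

theorem exists_eq_cons_of_not_finite {τ : Trace} (h : ¬ FiniteT τ) :
    ∃ τ', τ = cons τ.hd τ' ∧ ¬ FiniteT τ' := by
  obtain ⟨σ, s⟩ := τ
  cases s with
  | nil => exact absurd ⟨σ, .single σ⟩ h
  | cons σ' s => exact ⟨(σ', s), rfl, fun ⟨σ'', hc⟩ => h ⟨σ'', .cons σ hc⟩⟩

end Trace

namespace Follows

variable {Q R : TracePred}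

theorem single {σ : State} {τ : Trace} (hhd : τ.hd = σ) (hQ : Q τ) :
    Follows Q (Trace.single σ) τ :=
  ⟨fun a b => a = Trace.single σ ∧ b = τ, ⟨rfl, rfl⟩, by
    rintro a b ⟨rfl, rfl⟩
    exact Or.inl ⟨σ, rfl, hhd, hQ⟩⟩

theorem cons {σ : State} {τ τ' : Trace} (h : Follows Q τ τ') :
    Follows Q (Trace.cons σ τ) (Trace.cons σ τ') := by
  obtain ⟨S, hS, hstep⟩ := h
  refine ⟨fun a b => (a = Trace.cons σ τ ∧ b = Trace.cons σ τ') ∨ S a b,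
    Or.inl ⟨rfl, rfl⟩, ?_⟩
  rintro a b (⟨rfl, rfl⟩ | hab)
  · exact Or.inr ⟨σ, τ, τ', rfl, rfl, Or.inr hS⟩
  · rcases hstep a b hab with h | ⟨σ', a', b', ha, hb, hS'⟩
    · exact Or.inl h
    · exact Or.inr ⟨σ', a', b', ha, hb, Or.inr hS'⟩

theorem cases {τ τ' : Trace} (h : Follows Q τ τ') :
    (∃ σ, τ = Trace.single σ ∧ τ'.hd = σ ∧ Q τ') ∨
    (∃ σ a b, τ = Trace.cons σ a ∧ τ' = Trace.cons σ b ∧ Follows Q a b) := by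
  obtain ⟨S, hS, hstep⟩ := h
  rcases hstep τ τ' hS with h | ⟨σ, a, b, ha, hb, hS'⟩
  · exact Or.inl h
  · exact Or.inr ⟨σ, a, b, ha, hb, S, hS', hstep⟩

theorem hd_eq {τ τ' : Trace} (h : Follows Q τ τ') : τ'.hd = τ.hd := by
  rcases h.cases with ⟨σ, rfl, hhd, -⟩ | ⟨σ, a, b, rfl, rfl, -⟩
  · exact hhd
  · rfl

theorem refl_of_not_finite {τ : Trace} (h : ¬ FiniteT τ) : Follows Q τ τ := by
  refine ⟨fun a b => a = b ∧ ¬ FiniteT a, ⟨rfl, h⟩, ?_⟩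
  rintro a b ⟨rfl, ha⟩
  obtain ⟨a', ha', hfin⟩ := Trace.exists_eq_cons_of_not_finite ha
  exact Or.inr ⟨a.hd, a', a', ha', ha', rfl, hfin⟩

theorem eq_of_not_finite {τ τ' : Trace} (h : Follows Q τ τ') (hτ : ¬ FiniteT τ) : τ = τ' := by
  refine Prod.ext h.hd_eq.symm (Stream'.Seq.eq_of_bisim_strong
    (fun s s' => ∃ a b, Follows Q a b ∧ ¬ FiniteT a ∧ a.2 = s ∧ b.2 = s')
    ⟨τ, τ', h, hτ, rfl, rfl⟩ ?_)
  rintro - - ⟨a, b, hab, ha, rfl, rfl⟩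
  rcases hab.cases with ⟨σ, rfl, -, -⟩ | ⟨σ, a', b', rfl, rfl, hab'⟩
  · exact absurd ⟨σ, .single σ⟩ ha
  · refine Or.inr ⟨a'.hd, a'.2, b'.2, rfl, ?_, a', b', hab',
      fun ⟨σ', hc⟩ => ha ⟨σ', .cons σ hc⟩, rfl, rfl⟩
    exact congrArg (Stream'.Seq.cons · b'.2) hab'.hd_eq

theorem append_left {τ τ₁ τ₂ : Trace} {σ : State} (hτ : Converges τ σ)
    (h : Follows R τ₁ τ₂) (hhd : τ₁.hd = σ) : Follows R (τ.append τ₁) (τ.append τ₂) := by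
  induction hτ with
  | single σ =>
    rwa [Trace.single_append hhd, Trace.single_append (h.hd_eq.trans hhd)]
  | cons σ' _ ih =>
    rw [Trace.cons_append, Trace.cons_append]
    exact (ih hhd).cons

theorem exists_eq_append {τ τ' : Trace} {σ : State} (hτ : Converges τ σ)
    (h : Follows Q τ τ') : ∃ τ'', Q τ'' ∧ τ''.hd = σ ∧ τ' = τ.append τ'' := by
  induction hτ generalizing τ' with
  | single σ =>
    rcases h.cases with ⟨σ', he, hhd, hQ⟩ | ⟨σ', a, b, he, -, -⟩
    · obtain rfl : σ = σ' := congrArg Prod.fst he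
      exact ⟨τ', hQ, hhd, (Trace.single_append hhd).symm⟩
    · exact absurd he Trace.single_ne_cons
  | cons σ' _ ih =>
    rcases h.cases with ⟨σ'', he, -, -⟩ | ⟨σ'', a, b, he, rfl, hab⟩
    · exact absurd he.symm Trace.single_ne_cons
    · obtain ⟨rfl, rfl⟩ := Trace.cons_inj he
      obtain ⟨τ'', hQ, hhd, rfl⟩ := ih hab
      exact ⟨τ'', hQ, hhd, (Trace.cons_append _ _ _).symm⟩

theorem chop {τ τ₁ τ' : Trace} (h₁ : Follows Q τ τ₁) (h₂ : Follows R τ₁ τ') :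
    Follows (Chop Q R) τ τ' := by
  refine ⟨fun a b => ∃ c, Follows Q a c ∧ Follows R c b, ⟨τ₁, h₁, h₂⟩, ?_⟩
  rintro a b ⟨c, hac, hcb⟩
  rcases hac.cases with ⟨σ, rfl, hhd, hQ⟩ | ⟨σ, a', c', rfl, rfl, hac'⟩
  · exact Or.inl ⟨σ, rfl, hcb.hd_eq.trans hhd, c, hQ, hcb⟩
  · rcases hcb.cases with ⟨σ', he, -, -⟩ | ⟨σ', c'', b', he, rfl, hcb'⟩
    · exact absurd he.symm Trace.single_ne_cons
    · obtain ⟨rfl, rfl⟩ := Trace.cons_inj he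
      exact Or.inr ⟨σ, a', b', rfl, rfl, c', hac', hcb'⟩

theorem exists_of_chop {τ τ' : Trace} (h : Follows (Chop Q R) τ τ') :
    ∃ τ₁, Follows Q τ τ₁ ∧ Follows R τ₁ τ' := by
  by_cases hfin : FiniteT τ
  · obtain ⟨σ, hτ⟩ := hfin
    obtain ⟨τ'', ⟨τ₁, hQ, hR⟩, hhd, rfl⟩ := h.exists_eq_append hτ
    have hτ₁ : τ₁.hd = σ := hR.hd_eq.symm.trans hhd
    refine ⟨τ.append τ₁, ?_, hR.append_left hτ hτ₁⟩
    simpa only [Trace.append_single] using (single hτ₁ hQ).append_left hτ rfl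
  · obtain rfl := h.eq_of_not_finite hfin
    exact ⟨τ, refl_of_not_finite hfin, refl_of_not_finite hfin⟩

end Follows

theorem chop_assoc_general (P Q R : TracePred) :
    ∀ τ : Trace, Chop (Chop P Q) R τ ↔ Chop P (Chop Q R) τ := by
  intro τ'
  constructor
  · rintro ⟨τ, ⟨τ₀, hP, hQ⟩, hR⟩
    exact ⟨τ₀, hP, hQ.chop hR⟩
  · rintro ⟨τ₀, hP, hQR⟩
    obtain ⟨τ, hQ, hR⟩ := hQR.exists_of_chop
    exact ⟨τ, ⟨τ₀, hP, hQ⟩, hR⟩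

/-- The chop operator is associative. -/
theorem chop_assoc (P Q R : TracePred)
    (hP : IsSetoidPred P) (hQ : IsSetoidPred Q) (hR : IsSetoidPred R) :
    ∀ τ : Trace, Chop (Chop P Q) R τ ↔ Chop P (Chop Q R) τ :=
  chop_assoc_general P Q R

end WhileTrace
end

section
/- For any setoid trace predicate P, P ⇔ P ** [Last P]. -/
/-! A trace satisfying `P` is followed in itself by `[Last P]`, since each of its last states
witnesses `Last P`. Conversely, following a trace with singletons only reproduces it up to
bisimilarity, and `P` is closed under bisimilarity. -/

namespace WhileTrace

lemma Trace.single_or_cons (τ : Trace) :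
    (∃ σ, τ = Trace.single σ) ∨ ∃ σ τ', τ = Trace.cons σ τ' := by
  obtain ⟨σ, s⟩ := τ
  induction s using Stream'.Seq.recOn with
  | nil => exact Or.inl ⟨σ, rfl⟩
  | cons x s' => exact Or.inr ⟨σ, (x, s'), rfl⟩

lemma follows_self {Q : TracePred} {τ : Trace}
    (hQ : ∀ σ, Converges τ σ → Q (Trace.single σ)) : Follows Q τ τ := by
  refine ⟨fun a b => a = b ∧ ∀ σ, Converges a σ → Q (Trace.single σ), ⟨rfl, hQ⟩, ?_⟩
  rintro a b ⟨rfl, ha⟩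
  rcases a.single_or_cons with ⟨σ, rfl⟩ | ⟨σ, a', rfl⟩
  · exact Or.inl ⟨σ, rfl, rfl, ha σ (Converges.single σ)⟩
  · exact Or.inr ⟨σ, a', a', rfl, rfl, rfl, fun σ' h => ha σ' (Converges.cons σ h)⟩

lemma Follows.bisim {Q : TracePred} (hQ : ∀ b, Q b → ∃ σ, b = Trace.single σ)
    {τ τ' : Trace} (h : Follows Q τ τ') : Bisim τ τ' := by
  refine ⟨Follows Q, h, ?_⟩
  rintro a b ⟨R, hab, hR⟩
  rcases hR a b hab with ⟨σ, rfl, rfl, hb⟩ | ⟨σ, a', b', rfl, rfl, hR'⟩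
  · obtain ⟨σ', rfl⟩ := hQ b hb
    exact Or.inl ⟨σ', rfl, rfl⟩
  · exact Or.inr ⟨σ, a', b', rfl, rfl, R, hR', hR⟩

/-- For any setoid trace predicate `P`, `P ⇔ P ** [Last P]`. -/
theorem chop_sglt_last (P : TracePred) (hP : IsSetoidPred P) :
    ∀ τ : Trace, P τ ↔ Chop P (Sglt (Last P)) τ := by
  intro τ
  constructor
  · intro hτ
    exact ⟨τ, hτ, follows_self fun σ hσ => ⟨σ, ⟨τ, hτ, hσ⟩, rfl⟩⟩
  · rintro ⟨τ₀, hτ₀, hfollows⟩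
    have hsingle : ∀ b, Sglt (Last P) b → ∃ σ, b = Trace.single σ :=
      fun _ ⟨σ, _, hb⟩ => ⟨σ, hb⟩
    exact hP τ₀ τ hτ₀ (hfollows.bisim hsingle)

end WhileTrace
end
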